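/- Let 𝒢 be a mildly sparse class of graphs. Then for every integer s ≥ 1, there exists an integer C = C(𝒢, s) ≥ 1 such that every K_{s,s}-free graph G ∈ 𝒢 has average degree less than C · R(s, ω(G)+1). Moreover, if 𝒢 is in addition hereditary, then every K_{s,s}-free graph G ∈ 𝒢 has chromatic number at most C · R(s, ω(G)+1). -/

import Mathlib

open SimpleGraph

/-- The chromatic number of a graph as a natural number. -/
noncomputable def chromNum {V : Type*} (G : SimpleGraph V) : ℕ :=
  G.chromaticNumber.toNat

/-- The stability (independence) number of a graph. -/
noncomputable def indepNum {V : Type*} (G : SimpleGraph V) : ℕ := Gᶜ.cliqueNum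

/-- A stable (independent) set in a graph. -/
def IsStableSet {V : Type*} (G : SimpleGraph V) (S : Finset V) : Prop :=
  ∀ u ∈ S, ∀ v ∈ S, ¬ G.Adj u v

/-- The Ramsey number `R(s,w)`: the least `n ≥ 1` such that every graph on `n`
vertices contains a stable set of size `s` or a clique of size `w`. -/
noncomputable def ramsey (s w : ℕ) : ℕ :=
  sInf {n : ℕ | 1 ≤ n ∧ ∀ G : SimpleGraph (Fin n),
    (∃ S : Finset (Fin n), IsStableSet G S ∧ S.card = s) ∨
    (∃ S : Finset (Fin n), G.IsNClique w S)}

/-- `G` has no induced subgraph isomorphic to `H`. -/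
def IndFree {W V : Type*} (H : SimpleGraph W) (G : SimpleGraph V) : Prop :=
  ¬ Nonempty (H ↪g G)

/-- The number of ordered pairs `(a,b) ∈ A × B` forming an edge of `G`. -/
noncomputable def eCount {V : Type*} (G : SimpleGraph V) (A B : Finset V) : ℕ :=
  Set.ncard {p : V × V | p.1 ∈ A ∧ p.2 ∈ B ∧ G.Adj p.1 p.2}

/-- A graph is `(c,t)`-sparse if every two vertex subsets of size at least `t`
span at most a `(1-c)` fraction of the possible ordered adjacent pairs. -/
def CTSparse {V : Type*} [Fintype V] (G : SimpleGraph V) (c : ℝ) (t : ℕ) : Prop :=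
  ∀ A B : Finset V, t ≤ A.card → t ≤ B.card →
    (eCount G A B : ℝ) ≤ (1 - c) * A.card * B.card

/-- The average degree `2|E(G)|/|V(G)|` of a graph. -/
noncomputable def avgDeg {V : Type*} (G : SimpleGraph V) : ℝ :=
  2 * (G.edgeSet.ncard : ℝ) / (Nat.card V : ℝ)

/-- A class of (finite) graphs, given by a predicate on graphs on `Fin n`. -/
abbrev GraphClass := ∀ n : ℕ, SimpleGraph (Fin n) → Prop

/-- A class of graphs is hereditary if it is closed under taking induced
subgraphs (up to isomorphism). -/
def Hereditary (C : GraphClass) : Prop :=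
  ∀ (n : ℕ) (G : SimpleGraph (Fin n)) (m : ℕ) (H : SimpleGraph (Fin m)),
    C n G → Nonempty (H ↪g G) → C m H

/-- A class of graphs is mildly sparse if for every `c > 0` there is `C ≥ 1`
such that every `(c,t)`-sparse graph of the class has average degree
less than `C·t`. -/
def MildlySparse (C : GraphClass) : Prop :=
  ∀ c : ℝ, 0 < c → ∃ B : ℝ, 1 ≤ B ∧
    ∀ (t : ℕ), 1 ≤ t → ∀ (n : ℕ) (G : SimpleGraph (Fin n)), C n G →
      CTSparse G c t → avgDeg G < B * t

/-!
Let `R = R(s, ω(G) + 1)`, so that every `R` vertices of `G` contain a stable `s`-set. A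
`K_{s,s}`-free graph is then `(1/(4s), 2R)`-sparse: if sets `A, B` of size at least `2R` spanned
more edges, more than half of `A` would miss at most `|B|/(2s)` vertices of `B` each; a stable
`s`-set `S` among those vertices has at least `|B|/2 ≥ R` common neighbours in `B`, these contain
a stable `s`-set `T`, and `S ∪ T` induces `K_{s,s}`. Mild sparsity now bounds the average degree
by a constant times `R`. In a hereditary class this bound holds for every induced subgraph as
well, so every induced subgraph has a vertex of degree below it and greedy colouring applies.
-/

open Finset

lemma IsStableSet.insert {V : Type*} [DecidableEq V] {G : SimpleGraph V} {S : Finset V} {v : V}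
    (hS : IsStableSet G S) (hv : ∀ u ∈ S, ¬ G.Adj v u) : IsStableSet G (insert v S) := by
  simp only [IsStableSet, mem_insert, forall_eq_or_imp, G.irrefl, not_false_eq_true, true_and]
  exact ⟨hv, fun u hu => ⟨fun h => hv u hu h.symm, hS u hu⟩⟩

/-- The arrow relation `n → (s, w)`; `ramsey s w` is the least positive `n` satisfying it. -/
def RamseyArrow (n s w : ℕ) : Prop :=
  ∀ G : SimpleGraph (Fin n),
    (∃ S : Finset (Fin n), IsStableSet G S ∧ #S = s) ∨ ∃ S : Finset (Fin n), G.IsNClique w S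

lemma RamseyArrow.exists_subset {n s w : ℕ} (h : RamseyArrow n s w) {V : Type*}
    (G : SimpleGraph V) {A : Finset V} (hA : n ≤ #A) :
    (∃ S ⊆ A, IsStableSet G S ∧ #S = s) ∨ ∃ S ⊆ A, G.IsNClique w S := by
  obtain ⟨f⟩ : Nonempty (Fin n ↪ A) := Function.Embedding.nonempty_of_card_le (by simpa)
  let g : Fin n ↪ V := f.trans (Function.Embedding.subtype _)
  have hgA : ∀ S : Finset (Fin n), S.map g ⊆ A := fun S => by
    simp [subset_iff, g]
  rcases h (G.comap g) with ⟨S, hS, hcard⟩ | ⟨S, hS⟩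
  · exact Or.inl ⟨S.map g, hgA S, by simpa [IsStableSet] using hS, by simpa⟩
  · exact Or.inr ⟨S.map g, hgA S, hS.map.mono (map_comap_le g G)⟩

lemma RamseyArrow.add_succ {a b s w : ℕ} (ha : RamseyArrow a s (w + 1))
    (hb : RamseyArrow b (s + 1) w) : RamseyArrow (a + b + 1) (s + 1) (w + 1) := by
  intro G
  classical
  let v : Fin (a + b + 1) := 0
  let N := {u ∈ univ.erase v | G.Adj v u}
  let M := {u ∈ univ.erase v | ¬ G.Adj v u}
  have hNM : #N + #M = a + b := by
    simp [N, M, card_filter_add_card_filter_not]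
  by_cases hN : b ≤ #N
  · rcases hb.exists_subset G hN with hS | ⟨S, hSN, hS⟩
    · exact Or.inl (hS.imp fun _ => And.right)
    · exact Or.inr ⟨insert v S, hS.insert fun u hu => (mem_filter.1 (hSN hu)).2⟩
  · rcases ha.exists_subset G (A := M) (by omega) with ⟨S, hSM, hS, hcard⟩ | hS
    · have hvS : v ∉ S := fun h => by simpa [M] using hSM h
      refine Or.inl ⟨insert v S, hS.insert fun u hu => (mem_filter.1 (hSM hu)).2, ?_⟩
      rw [card_insert_of_notMem hvS, hcard]
    · exact Or.inr (hS.imp fun _ => And.right)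

lemma exists_ramseyArrow : ∀ s w : ℕ, ∃ n, 1 ≤ n ∧ RamseyArrow n s w
  | 0, _ => ⟨1, le_rfl, fun _ => Or.inl ⟨∅, by simp [IsStableSet]⟩⟩
  | _ + 1, 0 => ⟨1, le_rfl, fun _ => Or.inr ⟨∅, by simp⟩⟩
  | s + 1, w + 1 => by
    obtain ⟨a, -, ha⟩ := exists_ramseyArrow s (w + 1)
    obtain ⟨b, -, hb⟩ := exists_ramseyArrow (s + 1) w
    exact ⟨a + b + 1, by omega, ha.add_succ hb⟩

lemma ramseyArrow_ramsey (s w : ℕ) : 1 ≤ ramsey s w ∧ RamseyArrow (ramsey s w) s w :=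
  Nat.sInf_mem (exists_ramseyArrow s w)

lemma ramsey_mono_right {s w w' : ℕ} (h : w ≤ w') : ramsey s w ≤ ramsey s w' := by
  obtain ⟨hpos, harrow⟩ := ramseyArrow_ramsey s w'
  refine Nat.sInf_le ⟨hpos, fun G => (harrow G).imp id fun ⟨S, hS⟩ => ?_⟩
  obtain ⟨T, hTS, hT⟩ := exists_subset_card_eq (hS.2 ▸ h)
  exact ⟨T, hS.1.subset hTS, hT⟩

lemma SimpleGraph.exists_isStableSet_of_ramsey_le {V : Type*} [Fintype V] (G : SimpleGraph V)
    {s : ℕ} {A : Finset V} (hA : ramsey s (G.cliqueNum + 1) ≤ #A) :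
    ∃ S ⊆ A, IsStableSet G S ∧ #S = s := by
  refine ((ramseyArrow_ramsey _ _).2.exists_subset G hA).resolve_right fun ⟨S, _, hS⟩ => ?_
  have := hS.1.card_le_cliqueNum
  have := hS.2
  omega

lemma Finset.card_lt_two_mul_card_filter_le {ι : Type*} {A : Finset ι} {f : ι → ℝ} {m : ℝ}
    (hf : ∀ i ∈ A, 0 ≤ f i) (hsum : ∑ i ∈ A, f i < m * #A / 2) :
    #A < 2 * #{i ∈ A | f i ≤ m} := by
  have hsum_nonneg : 0 ≤ ∑ i ∈ A, f i := sum_nonneg hf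
  have hm : 0 < m := by
    by_contra! hm
    nlinarith [(#A).cast_nonneg (α := ℝ)]
  have hmarkov : #{i ∈ A | ¬ f i ≤ m} * m ≤ ∑ i ∈ A, f i := by
    calc #{i ∈ A | ¬ f i ≤ m} * m ≤ ∑ i ∈ A with ¬ f i ≤ m, f i := by
          simpa using card_nsmul_le_sum _ f m fun i hi => (not_le.1 (mem_filter.1 hi).2).le
      _ ≤ ∑ i ∈ A, f i := sum_le_sum_of_subset_of_nonneg (filter_subset _ _)
          fun i hi _ => hf i hi
  have hsplit := card_filter_add_card_filter_not (s := A) (fun i => f i ≤ m)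
  have : (#{i ∈ A | ¬ f i ≤ m} : ℝ) < #A / 2 := by
    rw [lt_div_iff₀ two_pos]
    nlinarith
  have : (#A : ℝ) < 2 * #{i ∈ A | f i ≤ m} := by
    rw [← hsplit] at this ⊢
    push_cast at this ⊢
    linarith
  exact_mod_cast this

namespace SimpleGraph

variable {V : Type*} {G : SimpleGraph V}

lemma eCount_add_sum_card_not_adj [DecidableRel G.Adj] (A B : Finset V) :
    eCount G A B + ∑ a ∈ A, #{b ∈ B | ¬ G.Adj a b} = #A * #B := by
  classical
  have : {p : V × V | p.1 ∈ A ∧ p.2 ∈ B ∧ G.Adj p.1 p.2} = {p ∈ A ×ˢ B | G.Adj p.1 p.2} := by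
    ext; simp [and_assoc]
  rw [eCount, this, Set.ncard_coe_finset, card_filter, sum_product, ← sum_add_distrib,
    ← smul_eq_mul, ← sum_const]
  refine sum_congr rfl fun a _ => ?_
  rw [← card_filter, card_filter_add_card_filter_not]

lemma card_le_card_commonNbhd_add_sum [DecidableEq V] [DecidableRel G.Adj] (S B : Finset V) :
    #B ≤ #{b ∈ B | ∀ a ∈ S, G.Adj a b} + ∑ a ∈ S, #{b ∈ B | ¬ G.Adj a b} := by
  have : B ⊆ {b ∈ B | ∀ a ∈ S, G.Adj a b} ∪ S.biUnion fun a => {b ∈ B | ¬ G.Adj a b} := by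
    intro b hb
    by_cases h : ∀ a ∈ S, G.Adj a b <;> simp_all
  exact (card_le_card this).trans ((card_union_le _ _).trans (by grw [card_biUnion_le]))

lemma nonempty_completeBipartiteGraph_embedding {α β : Type*} [Fintype α] [Fintype β]
    {S T : Finset V} (hScard : #S = Fintype.card α) (hTcard : #T = Fintype.card β)
    (hS : IsStableSet G S) (hT : IsStableSet G T) (hST : ∀ a ∈ S, ∀ b ∈ T, G.Adj a b) :
    Nonempty (completeBipartiteGraph α β ↪g G) := by
  let eS : α ≃ S := Fintype.equivOfCardEq (by simp [hScard])
  let eT : β ≃ T := Fintype.equivOfCardEq (by simp [hTcard])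
  have hinj : Function.Injective (Sum.elim (fun i => (eS i : V)) fun j => (eT j : V)) :=
    Function.Injective.sumElim (Subtype.val_injective.comp eS.injective)
      (Subtype.val_injective.comp eT.injective)
      fun i j => (hST _ (eS i).2 _ (eT j).2).ne
  refine ⟨⟨⟨_, hinj⟩, fun {x y} => ?_⟩⟩
  rcases x with i | j <;> rcases y with i' | j' <;>
    simp [hS _ (eS _).2 _ (eS _).2, hT _ (eT _).2 _ (eT _).2, hST _ (eS _).2 _ (eT _).2,
      (hST _ (eS _).2 _ (eT _).2).symm]

theorem ctSparse_of_indFree_completeBipartiteGraph [Fintype V] {s t : ℕ} (hs : 0 < s)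
    (hfree : IndFree (completeBipartiteGraph (Fin s) (Fin s)) G)
    (hstable : ∀ A : Finset V, t ≤ #A → ∃ S ⊆ A, IsStableSet G S ∧ #S = s) :
    CTSparse G (1 / (4 * s)) (2 * t) := by
  classical
  intro A B hA hB
  by_contra! hdense
  let nonNbrs (a : V) : ℕ := #{b ∈ B | ¬ G.Adj a b}
  have hsum : ∑ a ∈ A, (nonNbrs a : ℝ) < #B / (2 * s) * #A / 2 := by
    have hsplit : (eCount G A B : ℝ) + ∑ a ∈ A, (nonNbrs a : ℝ) = #A * #B := by
      exact_mod_cast eCount_add_sum_card_not_adj A B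
    have : (#B / (2 * s) * #A / 2 : ℝ) = 1 / (4 * s) * #A * #B := by ring
    linarith
  -- the threshold `|B|/(2s)` makes any `s` vertices of `A₁` miss at most half of `B`
  let A₁ := {a ∈ A | (nonNbrs a : ℝ) ≤ #B / (2 * s)}
  have hA₁ : t ≤ #A₁ := by
    have : #A < 2 * #A₁ := card_lt_two_mul_card_filter_le (fun a _ => (nonNbrs a).cast_nonneg) hsum
    omega
  obtain ⟨S, hSA₁, hS, hScard⟩ := hstable A₁ hA₁
  let N := {b ∈ B | ∀ a ∈ S, G.Adj a b}
  have hN : t ≤ #N := by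
    have hmiss : ∑ a ∈ S, (nonNbrs a : ℝ) ≤ #B / 2 := by
      calc ∑ a ∈ S, (nonNbrs a : ℝ) ≤ #S • (#B / (2 * s) : ℝ) :=
            sum_le_card_nsmul _ _ _ fun a ha => (mem_filter.1 (hSA₁ ha)).2
        _ = #B / 2 := by
          have : (s : ℝ) ≠ 0 := by positivity
          rw [hScard, nsmul_eq_mul]
          field_simp
    have hcover : (#B : ℝ) ≤ #N + ∑ a ∈ S, (nonNbrs a : ℝ) := by
      exact_mod_cast (show #B ≤ #N + ∑ a ∈ S, nonNbrs a by
        convert card_le_card_commonNbhd_add_sum S B)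
    have : (2 * t : ℝ) ≤ #B := by exact_mod_cast hB
    have : (t : ℝ) ≤ #N := by linarith
    exact_mod_cast this
  obtain ⟨T, hTN, hT, hTcard⟩ := hstable N hN
  exact hfree (nonempty_completeBipartiteGraph_embedding (by simpa) (by simpa) hS hT
    fun a ha b hb => (mem_filter.1 (hTN hb)).2 a ha)

lemma exists_coloring_of_forall_exists_card_adj_lt [DecidableEq V] [DecidableRel G.Adj] {k : ℕ}
    (h : ∀ T : Finset V, T.Nonempty → ∃ v ∈ T, #{w ∈ T | G.Adj v w} < k) (T : Finset V) :
    ∃ c : V → ℕ, (∀ v ∈ T, c v < k) ∧ ∀ u ∈ T, ∀ w ∈ T, G.Adj u w → c u ≠ c w := by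
  induction T using Finset.strongInduction with
  | H T ih =>
    rcases T.eq_empty_or_nonempty with rfl | hT
    · exact ⟨0, by simp, by simp⟩
    obtain ⟨v, hvT, hv⟩ := h T hT
    obtain ⟨c, hck, hc⟩ := ih (T.erase v) (erase_ssubset hvT)
    obtain ⟨a, ha, hfree⟩ := exists_mem_notMem_of_card_lt_card
      (s := {w ∈ T | G.Adj v w}.image c) (t := range k) (by grw [card_image_le]; simpa)
    refine ⟨Function.update c v a, fun u hu => ?_, fun u hu w hw huw => ?_⟩
    · by_cases huv : u = v
      · simpa [huv] using ha
      · simpa [huv] using hck u (mem_erase.2 ⟨huv, hu⟩)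
    · have hvx : ∀ x ∈ T, G.Adj v x → c x ≠ a := fun x hx hvx hxa =>
        hfree (hxa ▸ mem_image_of_mem c (mem_filter.2 ⟨hx, hvx⟩))
      by_cases huv : u = v <;> by_cases hwv : w = v
      · exact absurd (huv ▸ hwv ▸ huw) (G.irrefl)
      · subst huv
        simpa [hwv] using (hvx w hw huw).symm
      · subst hwv
        simpa [huv] using hvx u hu huw.symm
      · simpa [huv, hwv] using hc u (mem_erase.2 ⟨huv, hu⟩) w (mem_erase.2 ⟨hwv, hw⟩) huw

theorem colorable_of_forall_exists_card_adj_lt [Fintype V] [DecidableRel G.Adj] {k : ℕ}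
    (h : ∀ T : Finset V, T.Nonempty → ∃ v ∈ T, #{w ∈ T | G.Adj v w} < k) : G.Colorable k := by
  classical
  obtain ⟨c, hck, hc⟩ := exists_coloring_of_forall_exists_card_adj_lt h univ
  exact (colorable_iff_exists_bdd_nat_coloring k).2
    ⟨⟨c, fun huw => hc _ (mem_univ _) _ (mem_univ _) huw⟩, fun v => hck v (mem_univ v)⟩

lemma exists_degree_lt_of_avgDeg_lt [Fintype V] [Nonempty V] [DecidableRel G.Adj] {x : ℝ}
    (h : avgDeg G < x) : ∃ v, (G.degree v : ℝ) < x := by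
  by_contra! hdeg
  have hsum : Fintype.card V * x ≤ 2 * #G.edgeFinset := by
    have := sum_le_sum fun v (_ : v ∈ univ) => hdeg v
    simp only [sum_const, card_univ, nsmul_eq_mul] at this
    exact_mod_cast this.trans_eq (by exact_mod_cast sum_degrees_eq_twice_card_edges G)
  rw [avgDeg, ← coe_edgeFinset, Set.ncard_coe_finset, Nat.card_eq_fintype_card,
    div_lt_iff₀ (by positivity)] at h
  linarith

lemma Embedding.degree_eq_card_filter_adj {W : Type*} [Fintype W] {H : SimpleGraph W}
    [DecidableRel H.Adj] [DecidableRel G.Adj] (f : H ↪g G) (v : W) :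
    H.degree v = #{w ∈ univ.map f.toEmbedding | G.Adj (f v) w} := by
  rw [← card_neighborFinset_eq_degree, ← card_map f.toEmbedding]
  congr 1
  ext w
  simp only [mem_map, mem_neighborFinset, mem_filter, mem_univ, true_and]
  constructor
  · rintro ⟨a, ha, rfl⟩
    exact ⟨⟨a, rfl⟩, f.map_adj_iff.2 ha⟩
  · rintro ⟨⟨a, rfl⟩, ha⟩
    exact ⟨a, f.map_adj_iff.1 ha, rfl⟩

theorem chromNum_le_of_forall_embedding_avgDeg_lt [Fintype V] {k : ℕ}
    (h : ∀ (m : ℕ) (H : SimpleGraph (Fin m)), Nonempty (H ↪g G) → avgDeg H < k) :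
    chromNum G ≤ k := by
  classical
  refine ENat.toNat_le_of_le_natCast (Colorable.chromaticNumber_le
    (colorable_of_forall_exists_card_adj_lt fun T hT => ?_))
  let f : Fin #T ↪ V := T.equivFin.symm.toEmbedding.trans (Function.Embedding.subtype _)
  have hf : univ.map f = T := by
    ext x
    simp only [mem_map, mem_univ, true_and]
    exact ⟨fun ⟨a, ha⟩ => ha ▸ (T.equivFin.symm a).2, fun hx => ⟨T.equivFin ⟨x, hx⟩, by simp [f]⟩⟩
  have : Nonempty (Fin #T) := ⟨⟨0, hT.card_pos⟩⟩
  obtain ⟨v, hv⟩ := exists_degree_lt_of_avgDeg_lt (h _ (G.comap f) ⟨Embedding.comap f G⟩)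
  refine ⟨f v, by simp [f], ?_⟩
  rw [(Embedding.comap f G).degree_eq_card_filter_adj] at hv
  have hv : #{w ∈ univ.map f | G.Adj (f v) w} < k := by exact_mod_cast hv
  rwa [hf] at hv

lemma Embedding.cliqueNum_le [Finite V] {W : Type*} {H : SimpleGraph W}
    (f : H ↪g G) : H.cliqueNum ≤ G.cliqueNum := by
  obtain ⟨S, hS⟩ := H.exists_isNClique_cliqueNum
  have hS' : G.IsNClique H.cliqueNum (S.map f.toEmbedding) :=
    hS.map.mono ((map_le_iff_le_comap _ _ _).2 f.toHom.le_comap)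
  exact hS'.2 ▸ hS'.1.card_le_cliqueNum

end SimpleGraph

lemma IndFree.of_embedding {U V W : Type*} {K : SimpleGraph U} {G : SimpleGraph V}
    {H : SimpleGraph W} (hG : IndFree K G) (f : H ↪g G) : IndFree K H :=
  fun ⟨g⟩ => hG ⟨f.comp g⟩

theorem MildlySparse.exists_avgDeg_lt {C : GraphClass} (hC : MildlySparse C) {s : ℕ}
    (hs : 0 < s) : ∃ B : ℕ, 1 ≤ B ∧ ∀ (n : ℕ) (G : SimpleGraph (Fin n)), C n G →
      IndFree (completeBipartiteGraph (Fin s) (Fin s)) G →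
      avgDeg G < (B * ramsey s (G.cliqueNum + 1) : ℕ) := by
  obtain ⟨B₀, hB₀, hsparse⟩ := hC (1 / (4 * s)) (by positivity)
  refine ⟨⌈2 * B₀⌉₊, Nat.one_le_iff_ne_zero.2 (by positivity), fun n G hG hfree => ?_⟩
  have hR := (ramseyArrow_ramsey s (G.cliqueNum + 1)).1
  have hlt := hsparse _ (by omega) n G hG (G.ctSparse_of_indFree_completeBipartiteGraph hs hfree
    fun A hA => G.exists_isStableSet_of_ramsey_le hA)
  calc avgDeg G < B₀ * ↑(2 * ramsey s (G.cliqueNum + 1)) := hlt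
    _ ≤ ⌈2 * B₀⌉₊ * ramsey s (G.cliqueNum + 1) := by
      push_cast
      rw [← mul_assoc, mul_comm B₀]
      gcongr
      exact Nat.le_ceil _
    _ = _ := by push_cast; rfl

/-- if a class `C` of graphs is mildly sparse, then for every
`s ≥ 1` there is an integer `B ≥ 1` such that every `K_{s,s}`-free graph of the
class has average degree less than `B·R(s, ω(G)+1)`; moreover, if `C` is in
addition hereditary, then every such graph has chromatic number at most
`B·R(s, ω(G)+1)`. -/
theorem stmt8 (C : GraphClass) (hC : MildlySparse C) (s : ℕ) (hs : 1 ≤ s) :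
    ∃ B : ℕ, 1 ≤ B ∧
      (∀ (n : ℕ) (G : SimpleGraph (Fin n)), C n G →
        IndFree (completeBipartiteGraph (Fin s) (Fin s)) G →
        avgDeg G < (B * ramsey s (G.cliqueNum + 1) : ℕ)) ∧
      (Hereditary C → ∀ (n : ℕ) (G : SimpleGraph (Fin n)), C n G →
        IndFree (completeBipartiteGraph (Fin s) (Fin s)) G →
        chromNum G ≤ B * ramsey s (G.cliqueNum + 1)) := by
  obtain ⟨B, hB, havg⟩ := hC.exists_avgDeg_lt hs
  refine ⟨B, hB, havg, fun hered n G hG hfree => ?_⟩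
  refine chromNum_le_of_forall_embedding_avgDeg_lt fun m H ⟨f⟩ => ?_
  calc avgDeg H < (B * ramsey s (H.cliqueNum + 1) : ℕ) :=
        havg m H (hered n G m H hG ⟨f⟩) (hfree.of_embedding f)
    _ ≤ (B * ramsey s (G.cliqueNum + 1) : ℕ) := by
      gcongr
      exact ramsey_mono_right (by simpa using f.cliqueNum_le)
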